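/- arXiv:1406.1634 — 6 statements merged into one kernel-verified Lean document; each statement's English description precedes it below -/
import Mathlib

section
/- Let n ≥ 3 be odd, set p = (n-1)/2, and let m > 2. Then the double integral ∫_{ℝ^p} ∫_{ℝ^p} (1 + ‖x‖²)^{(1-n)/4} (1 + ‖y‖²)^{(1-n)/4} (1 + log(1 + ‖x‖² + ‖y‖² + ‖x‖²‖y‖²))^{-m} dy dx is finite. -/
/-!
Since `1 + ‖x‖² + ‖y‖² + ‖x‖²‖y‖² = (1 + ‖x‖²)(1 + ‖y‖²)`, the logarithm splits as `A + B`, and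
`(1 + A + B)² ≥ (1 + A)(1 + B)` bounds the integrand by `F x * F y` with
`F x = (1 + ‖x‖²)^(-p/2) (1 + log (1 + ‖x‖²))^(-m/2)`. In polar coordinates `F` has radial profile
`r^(p-1) (1 + r²)^(-p/2) (1 + log (1 + r²))^(-m/2) ≤ r⁻¹ (1 + log r)^(-m/2)` for `r > 1`, which is
integrable at infinity because `m/2 > 1`.
-/

open MeasureTheory Set Filter Real

theorem integrableOn_Ioi_inv_mul_one_add_log_rpow_neg {s : ℝ} (hs : 1 < s) :
    IntegrableOn (fun x : ℝ => x⁻¹ * (1 + log x) ^ (-s)) (Ioi 1) := by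
  have hs' : 1 - s ≠ 0 := by linarith
  have hpos : ∀ x ∈ Ici (1 : ℝ), 0 < 1 + log x := fun x hx => by
    have := log_nonneg (mem_Ici.1 hx); linarith
  refine integrableOn_Ioi_deriv_of_nonneg' (g := fun x => (1 + log x) ^ (1 - s) / (1 - s))
    (fun x hx => ?_) (fun x hx => ?_) ?_ (l := 0)
  · have hx0 : x ≠ 0 := by have := mem_Ici.1 hx; positivity
    refine ((((hasDerivAt_log hx0).const_add 1).rpow_const
      (.inl (hpos x hx).ne')).div_const (1 - s)).congr_deriv ?_
    rw [sub_sub_cancel_left]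
    field_simp
  · have hlog_pos := hpos x (mem_Ici_of_Ioi hx)
    have hx_pos : 0 < x := one_pos.trans hx
    positivity
  · have := (tendsto_rpow_neg_atTop (y := s - 1) (by linarith)).comp
      (tendsto_atTop_add_const_left _ 1 tendsto_log_atTop)
    simpa [neg_sub] using this.div_const (1 - s)

theorem continuous_one_add_sq_rpow_mul_one_add_log_rpow (c s : ℝ) :
    Continuous fun r : ℝ => (1 + r ^ 2) ^ c * (1 + log (1 + r ^ 2)) ^ s := by
  have hsq : Continuous fun r : ℝ => 1 + r ^ 2 := by fun_prop
  have hsq_pos (r : ℝ) : 0 < 1 + r ^ 2 := by positivity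
  have hlog_pos (r : ℝ) : 0 < 1 + log (1 + r ^ 2) := by
    have := log_nonneg (le_add_of_nonneg_right (sq_nonneg r)); linarith
  exact (hsq.rpow_const fun r => .inl (hsq_pos r).ne').mul
    ((continuous_const.add (hsq.log fun r => (hsq_pos r).ne')).rpow_const
      fun r => .inl (hlog_pos r).ne')

theorem integrableOn_Ioi_pow_mul_one_add_sq_rpow_mul_one_add_log_rpow {d : ℕ} (hd : 1 ≤ d)
    {s : ℝ} (hs : 1 < s) :
    IntegrableOn (fun r : ℝ => r ^ (d - 1) * ((1 + r ^ 2) ^ (-(d / 2 : ℝ)) *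
      (1 + log (1 + r ^ 2)) ^ (-s))) (Ioi 0) := by
  have hcont : Continuous fun r : ℝ => r ^ (d - 1) * ((1 + r ^ 2) ^ (-(d / 2 : ℝ)) *
      (1 + log (1 + r ^ 2)) ^ (-s)) :=
    (continuous_pow _).mul (continuous_one_add_sq_rpow_mul_one_add_log_rpow _ _)
  rw [← Ioc_union_Ioi_eq_Ioi zero_le_one]
  refine (hcont.integrableOn_Icc.mono_set Ioc_subset_Icc_self).union
    ((integrableOn_Ioi_inv_mul_one_add_log_rpow_neg hs).mono'
      hcont.aestronglyMeasurable.restrict ?_)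
  filter_upwards [ae_restrict_mem measurableSet_Ioi] with r (hr : 1 < r)
  have hr0 : 0 < r := one_pos.trans hr
  have hlog : 0 < 1 + log r := by have := log_pos hr; linarith
  have hpow : r ^ (d - 1) * (1 + r ^ 2) ^ (-(d / 2 : ℝ)) ≤ r⁻¹ :=
    calc r ^ (d - 1) * (1 + r ^ 2) ^ (-(d / 2 : ℝ))
        ≤ r ^ (d - 1) * (r ^ 2) ^ (-(d / 2 : ℝ)) := by
          gcongr r ^ (d - 1) * ?_
          exact rpow_le_rpow_of_nonpos (by positivity) (by linarith) (neg_nonpos.2 (by positivity))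
      _ = r⁻¹ := by
          rw [← rpow_natCast, ← rpow_natCast, ← rpow_mul hr0.le, ← rpow_add hr0,
            Nat.cast_sub hd]
          push_cast
          rw [show (d : ℝ) - 1 + 2 * -(d / 2) = -1 by ring, rpow_neg_one]
  have hlog_mono : 1 + log r ≤ 1 + log (1 + r ^ 2) := by gcongr; nlinarith
  have hlog_le : (1 + log (1 + r ^ 2)) ^ (-s) ≤ (1 + log r) ^ (-s) :=
    rpow_le_rpow_of_nonpos hlog hlog_mono (by linarith)
  have hrpow_nonneg : 0 ≤ (1 + log (1 + r ^ 2)) ^ (-s) := rpow_nonneg (by linarith) _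
  rw [norm_of_nonneg (by positivity), ← mul_assoc]
  gcongr

theorem integrable_one_add_norm_sq_rpow_mul_one_add_log_rpow {E : Type*} [NormedAddCommGroup E]
    [NormedSpace ℝ E] [FiniteDimensional ℝ E] [Nontrivial E] [MeasurableSpace E] [BorelSpace E]
    (μ : Measure E) [μ.IsAddHaarMeasure] {s : ℝ} (hs : 1 < s) :
    Integrable (fun x : E => (1 + ‖x‖ ^ 2) ^ (-(Module.finrank ℝ E / 2 : ℝ)) *
      (1 + log (1 + ‖x‖ ^ 2)) ^ (-s)) μ := by
  refine (integrable_fun_norm_addHaar μ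
    (f := fun r => (1 + r ^ 2) ^ (-(Module.finrank ℝ E / 2 : ℝ)) *
      (1 + log (1 + r ^ 2)) ^ (-s))).2 ?_
  simpa only [smul_eq_mul] using
    integrableOn_Ioi_pow_mul_one_add_sq_rpow_mul_one_add_log_rpow Module.finrank_pos hs

theorem one_add_log_mul_rpow_neg_le {a b m : ℝ} (ha : 1 ≤ a) (hb : 1 ≤ b) (hm : 0 ≤ m) :
    (1 + log (a * b)) ^ (-m) ≤ (1 + log a) ^ (-(m / 2)) * (1 + log b) ^ (-(m / 2)) := by
  have hA := log_nonneg ha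
  have hB := log_nonneg hb
  rw [log_mul (by positivity) (by positivity), ← mul_rpow (by positivity) (by positivity),
    show -m = 2 * -(m / 2) by ring, rpow_mul (by positivity), rpow_two]
  exact rpow_le_rpow_of_nonpos (by positivity) (by nlinarith) (by linarith)

theorem stmt_7_general (n p : ℕ) (hn : 3 ≤ n) (hp : n = 2*p + 1)
    (m : ℝ) (hm : 2 < m) :
    Integrable (fun q : EuclideanSpace ℝ (Fin p) × EuclideanSpace ℝ (Fin p) =>
      (1 + ‖q.1‖^2) ^ (((1:ℝ) - n)/4) * (1 + ‖q.2‖^2) ^ (((1:ℝ) - n)/4) *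
        (1 + Real.log (1 + ‖q.1‖^2 + ‖q.2‖^2 + ‖q.1‖^2*‖q.2‖^2)) ^ (-m)) := by
  have : NeZero p := ⟨by omega⟩
  have hexp : ((1 : ℝ) - n) / 4 = -(p / 2 : ℝ) := by rw [hp]; push_cast; ring
  have hF := integrable_one_add_norm_sq_rpow_mul_one_add_log_rpow
    (volume : Measure (EuclideanSpace ℝ (Fin p))) (s := m / 2) (by linarith)
  rw [finrank_euclideanSpace_fin] at hF
  refine (hF.mul_prod hF).mono' (by fun_prop) (ae_of_all _ fun q => ?_)
  have ha : 1 ≤ 1 + ‖q.1‖ ^ 2 := le_add_of_nonneg_right (sq_nonneg _)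
  have hb : 1 ≤ 1 + ‖q.2‖ ^ 2 := le_add_of_nonneg_right (sq_nonneg _)
  have hlog := one_add_log_mul_rpow_neg_le ha hb (by linarith : 0 ≤ m)
  have hlog_nonneg := log_nonneg (one_le_mul_of_one_le_of_one_le ha hb)
  rw [hexp, show 1 + ‖q.1‖ ^ 2 + ‖q.2‖ ^ 2 + ‖q.1‖ ^ 2 * ‖q.2‖ ^ 2
    = (1 + ‖q.1‖ ^ 2) * (1 + ‖q.2‖ ^ 2) by ring, norm_of_nonneg (by positivity)]
  calc _ ≤ (1 + ‖q.1‖ ^ 2) ^ (-(p / 2 : ℝ)) * (1 + ‖q.2‖ ^ 2) ^ (-(p / 2 : ℝ)) *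
        ((1 + log (1 + ‖q.1‖ ^ 2)) ^ (-(m / 2)) * (1 + log (1 + ‖q.2‖ ^ 2)) ^ (-(m / 2))) := by
        gcongr
    _ = _ := by ring

/-- for `n ≥ 3` odd, `p = (n-1)/2`, `m > 2`, the double integral
`∫∫ (1+‖x‖²)^{(1-n)/4}(1+‖y‖²)^{(1-n)/4}(1+log(1+‖x‖²+‖y‖²+‖x‖²‖y‖²))^{-m}` is finite. -/
theorem stmt_7 (n p : ℕ) (hn : 3 ≤ n) (hodd : Odd n) (hp : n = 2*p + 1)
    (m : ℝ) (hm : 2 < m) :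
    Integrable (fun q : EuclideanSpace ℝ (Fin p) × EuclideanSpace ℝ (Fin p) =>
      (1 + ‖q.1‖^2) ^ (((1:ℝ) - n)/4) * (1 + ‖q.2‖^2) ^ (((1:ℝ) - n)/4) *
        (1 + Real.log (1 + ‖q.1‖^2 + ‖q.2‖^2 + ‖q.1‖^2*‖q.2‖^2)) ^ (-m)) :=
  stmt_7_general n p hn hp m hm
end

section
/- Let n ≥ 3, k, l integers with 1 ≤ k ≤ n, and ν ∈ ℝ with ν ≥ min{(1-k)/2, (k-n)/2}. Then the integral ∫_{ℝ^{k-1}} ∫_{ℝ^{n-k}} (2 + 4‖x‖² + 4‖y‖² + 4‖x‖²‖y‖²)^ν dy dx diverges. -/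
/-!
Since `2 + 4‖x‖² + 4‖y‖² + 4‖x‖²‖y‖² = (2 + 4‖y‖²) + (4 + 4‖y‖²)‖x‖²`, every slice of the
integrand at fixed `y` has the form `x ↦ (a + b‖x‖²)^ν` with `b > 0`, so by Fubini it suffices
to see that such a function is not integrable on `ℝ^d` when `d ≥ 1` and `ν ≥ -d/2`. In polar
coordinates its integral is `∫₀^∞ r^(d-1) (a + b r²)^ν dr`, and the integrand is asymptotic to
`b^ν r^(d-1+2ν)` with `d - 1 + 2ν ≥ -1`. The bound on `ν` puts one of the two factors `ℝ^(k-1)`,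
`ℝ^(n-k)` in this situation: if the minimum is attained by a zero-dimensional factor, then
`ν ≥ 0` and the other factor works.
-/

open MeasureTheory Filter Asymptotics Set Module

theorem isEquivalent_rpow_add_mul_sq_atTop (a : ℝ) {b : ℝ} (hb : 0 < b) (s : ℝ) :
    (fun y : ℝ ↦ (a + b * y ^ 2) ^ s) ~[atTop] fun y ↦ b ^ s * y ^ (2 * s) := by
  have hsq : (fun y : ℝ ↦ a + b * y ^ 2) ~[atTop] fun y ↦ b * y ^ 2 := by
    refine IsLittleO.isEquivalent ?_
    simp only [Pi.sub_def, add_sub_cancel_right]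
    refine isLittleO_const_left.2 (Or.inr ?_)
    exact tendsto_norm_atTop_atTop.comp ((tendsto_pow_atTop two_ne_zero).const_mul_atTop hb)
  refine (hsq.rpow (fun y ↦ by positivity)).congr_right ?_
  filter_upwards [eventually_ge_atTop 0] with y hy
  simp only [Pi.pow_apply]
  rw [Real.mul_rpow hb.le (by positivity), ← Real.rpow_natCast_mul hy]
  norm_num

theorem isBigO_rpow_pow_mul_rpow_add_mul_sq_atTop (a : ℝ) {b : ℝ} (hb : 0 < b) (s : ℝ) (m : ℕ) :
    (fun y : ℝ ↦ y ^ ((m : ℝ) + 2 * s)) =O[atTop] fun y ↦ y ^ m * (a + b * y ^ 2) ^ s := by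
  have h := ((IsEquivalent.refl (u := fun y : ℝ ↦ y ^ m)).mul
    (isEquivalent_rpow_add_mul_sq_atTop a hb s)).symm.isBigO
  refine ((isBigO_const_mul_self (b ^ s)⁻¹ _ atTop).congr' ?_ EventuallyEq.rfl).trans h
  filter_upwards [eventually_gt_atTop 0] with y hy
  have : b ^ s ≠ 0 := (Real.rpow_pos_of_pos hb s).ne'
  simp only [Pi.mul_apply]
  rw [Real.rpow_add hy, Real.rpow_natCast]
  field_simp

theorem not_integrable_rpow_add_mul_norm_sq {E : Type*} [NormedAddCommGroup E] [NormedSpace ℝ E]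
    [FiniteDimensional ℝ E] [MeasurableSpace E] [BorelSpace E] [Nontrivial E]
    (μ : Measure E) [μ.IsAddHaarMeasure] {a b s : ℝ} (hb : 0 < b)
    (hs : -(finrank ℝ E : ℝ) / 2 ≤ s) :
    ¬ Integrable (fun x : E ↦ (a + b * ‖x‖ ^ 2) ^ s) μ := by
  intro h
  have hd : 1 ≤ finrank ℝ E := Module.finrank_pos
  have hrad := (integrable_fun_norm_addHaar μ (f := fun y ↦ (a + b * y ^ 2) ^ s)).1 h
  have hpow : IntegrableAtFilter (fun y : ℝ ↦ y ^ (((finrank ℝ E - 1 : ℕ) : ℝ) + 2 * s)) atTop :=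
    (isBigO_rpow_pow_mul_rpow_add_mul_sq_atTop a hb s _).integrableAtFilter
      (measurable_id.pow_const _).aestronglyMeasurable.stronglyMeasurableAtFilter
      ⟨Ioi 0, Ioi_mem_atTop 0, hrad⟩
  rw [integrableAtFilter_rpow_atTop_iff, Nat.cast_sub hd] at hpow
  push_cast at hpow
  linarith

theorem not_integrable_prod_rpow_of_left {E F : Type*} [NormedAddCommGroup E] [NormedSpace ℝ E]
    [FiniteDimensional ℝ E] [MeasurableSpace E] [BorelSpace E] [Nontrivial E]
    [NormedAddCommGroup F] [MeasurableSpace F]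
    (μ : Measure E) [μ.IsAddHaarMeasure] (ν : Measure F) [SFinite ν] [NeZero ν]
    {a b c d s : ℝ} (hb : 0 < b) (hd : 0 ≤ d) (hs : -(finrank ℝ E : ℝ) / 2 ≤ s) :
    ¬ Integrable (fun q : E × F ↦
      (a + b * ‖q.1‖ ^ 2 + c * ‖q.2‖ ^ 2 + d * ‖q.1‖ ^ 2 * ‖q.2‖ ^ 2) ^ s) (μ.prod ν) := by
  intro h
  obtain ⟨y, hy⟩ := h.prod_left_ae.exists
  refine not_integrable_rpow_add_mul_norm_sq μ (a := a + c * ‖y‖ ^ 2) (b := b + d * ‖y‖ ^ 2)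
    (by positivity) hs ?_
  convert hy using 3
  ring

theorem one_le_and_neg_half_le_of_min_le {d₁ d₂ : ℕ} {s : ℝ} (hd : 1 ≤ d₁ + d₂)
    (hs : min (-(d₁ : ℝ) / 2) (-(d₂ : ℝ) / 2) ≤ s) :
    (1 ≤ d₁ ∧ -(d₁ : ℝ) / 2 ≤ s) ∨ (1 ≤ d₂ ∧ -(d₂ : ℝ) / 2 ≤ s) := by
  rcases min_le_iff.1 hs with h | h
  · rcases Nat.eq_zero_or_pos d₁ with h₁ | h₁
    · refine Or.inr ⟨by omega, ?_⟩
      have : (d₁ : ℝ) = 0 := by exact_mod_cast h₁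
      linarith [(Nat.cast_nonneg d₂ : (0 : ℝ) ≤ d₂)]
    · exact Or.inl ⟨h₁, h⟩
  · rcases Nat.eq_zero_or_pos d₂ with h₂ | h₂
    · refine Or.inl ⟨by omega, ?_⟩
      have : (d₂ : ℝ) = 0 := by exact_mod_cast h₂
      linarith [(Nat.cast_nonneg d₁ : (0 : ℝ) ≤ d₁)]
    · exact Or.inr ⟨h₂, h⟩

/-- for `1 ≤ k ≤ n` and `ν ≥ min{(1-k)/2, (k-n)/2}`, the integral
`∫_{ℝ^{k-1}}∫_{ℝ^{n-k}} (2+4‖x‖²+4‖y‖²+4‖x‖²‖y‖²)^ν dy dx` diverges. -/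
theorem stmt_8 (n k : ℕ) (hn : 3 ≤ n) (hk1 : 1 ≤ k) (hkn : k ≤ n) (ν : ℝ)
    (hν : min ((1 - (k:ℝ))/2) (((k:ℝ) - n)/2) ≤ ν) :
    ¬ Integrable (fun q : EuclideanSpace ℝ (Fin (k-1)) × EuclideanSpace ℝ (Fin (n-k)) =>
      (2 + 4*‖q.1‖^2 + 4*‖q.2‖^2 + 4*‖q.1‖^2*‖q.2‖^2) ^ ν) := by
  intro h
  rw [Measure.volume_eq_prod] at h
  have hν' : min (-((k - 1 : ℕ) : ℝ) / 2) (-((n - k : ℕ) : ℝ) / 2) ≤ ν := by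
    rw [Nat.cast_sub hk1, Nat.cast_sub hkn]; convert hν using 2 <;> ring
  rcases one_le_and_neg_half_le_of_min_le (by omega) hν' with ⟨hd, hs⟩ | ⟨hd, hs⟩
  · have : Nonempty (Fin (k - 1)) := ⟨⟨0, hd⟩⟩
    exact not_integrable_prod_rpow_of_left volume volume (by norm_num) (by norm_num)
      (by simpa using hs) h
  · have : Nonempty (Fin (n - k)) := ⟨⟨0, hd⟩⟩
    refine not_integrable_prod_rpow_of_left volume volume (a := 2) (b := 4) (c := 4) (d := 4)
      (by norm_num) (by norm_num) (by simpa using hs) (h.swap.congr (ae_of_all _ fun q ↦ ?_))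
    simp only [Function.comp_apply, Prod.fst_swap, Prod.snd_swap]
    congr 1
    ring
end

section
/- Let G = SL(n,ℝ) with n ≥ 3, σ(g) = SgS^{-1} where S is the matrix with -1 in the (1,n) and (n,1) entries, identity block I_{n-2} in the middle, and zeros elsewhere. Let a_t = exp(t·diag(1,0,…,0,-1)) and K = SO(n). If g ∈ K a_t H where H is the fixed point group of σ, then ‖g σ(g)^{-1}‖²_{HS} = n - 2 + 2cosh(4t), where ‖·‖_{HS} is the Hilbert–Schmidt (Frobenius) norm on n×n matrices. -/
/-!
Write `σ X = S X S⁻¹`. For `g = k a h` with `h` fixed by `σ`, `g σ(g)⁻¹ = k (a σ(a)⁻¹) σ(k)⁻¹`;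
since `S` is orthogonal so is `σ(k)`, and the Hilbert–Schmidt norm is invariant under orthogonal
matrices on both sides, so `‖g σ(g)⁻¹‖ = ‖a σ(a)⁻¹‖`. The matrix `S` is the reflection
`1 - u uᵀ` in `u = e₁ + eₙ` (so `S = Sᵀ = S⁻¹`), and conjugation by it swaps the first and last
diagonal entries: `σ(a_t) = a_{-t}`. Hence `a σ(a)⁻¹ = a_{2t}`, whose squared norm is
`tr a_{4t} = e^{4t} + e^{-4t} + n - 2`.
-/

open Matrix

section

variable {m R : Type*} [Fintype m] [DecidableEq m] [CommRing R]

theorem trace_mul_transpose_orthogonal_mul {U V : Matrix m m R} (hU : Uᵀ * U = 1)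
    (hV : V * Vᵀ = 1) (M : Matrix m m R) :
    trace ((U * M * V) * (U * M * V)ᵀ) = trace (M * Mᵀ) := by
  calc trace ((U * M * V) * (U * M * V)ᵀ) = trace (U * (M * Mᵀ) * Uᵀ) := by
        simp only [transpose_mul, mul_assoc, ← mul_assoc V, hV, one_mul]
    _ = trace (M * Mᵀ) := by rw [trace_mul_comm, ← mul_assoc, hU, one_mul]

theorem conj_inv_mul_transpose_self {S k : Matrix m m R} (hS : Sᵀ * S = 1) (hk : kᵀ * k = 1) :
    (S * k * S⁻¹)⁻¹ * (S * k * S⁻¹)⁻¹ᵀ = 1 := by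
  have hX : (S * k * Sᵀ)ᵀ * (S * k * Sᵀ) = 1 := by
    simp only [transpose_mul, transpose_transpose, mul_assoc, ← mul_assoc Sᵀ S, hS, one_mul,
      ← mul_assoc kᵀ k, hk]
    exact mul_eq_one_comm.mp hS
  rw [inv_eq_left_inv hS, inv_eq_left_inv hX, transpose_transpose, hX]

theorem mul_conj_inv_of_eq_mul_mul {S k a h g : Matrix m m R} (hS : IsUnit S.det)
    (hh : IsUnit h.det) (hhS : S * h * S⁻¹ = h) (hg : g = k * a * h) :
    g * (S * g * S⁻¹)⁻¹ = k * (a * (S * a * S⁻¹)⁻¹) * (S * k * S⁻¹)⁻¹ := by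
  have hσg : S * g * S⁻¹ = (S * k * S⁻¹) * (S * a * S⁻¹) * h := by
    rw [← hhS, hg]
    simp only [mul_assoc, nonsing_inv_mul_cancel_left S _ hS]
  rw [hσg, Matrix.mul_inv_rev, Matrix.mul_inv_rev, hg]
  simp only [mul_assoc, mul_nonsing_inv_cancel_left h _ hh]

theorem trace_mul_conj_inv_mul_transpose {S k a h g : Matrix m m R} (hS : Sᵀ * S = 1)
    (hk : kᵀ * k = 1) (hh : IsUnit h.det) (hhS : S * h * S⁻¹ = h) (hg : g = k * a * h) :
    trace ((g * (S * g * S⁻¹)⁻¹) * (g * (S * g * S⁻¹)⁻¹)ᵀ)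
      = trace ((a * (S * a * S⁻¹)⁻¹) * (a * (S * a * S⁻¹)⁻¹)ᵀ) := by
  rw [mul_conj_inv_of_eq_mul_mul (isUnit_det_of_left_inverse hS) hh hhS hg]
  exact trace_mul_transpose_orthogonal_mul hk (conj_inv_mul_transpose_self hS hk) _

theorem one_sub_vecMulVec_mul_self {u : m → R} (hu : u ⬝ᵥ u = 2) :
    (1 - vecMulVec u u) * (1 - vecMulVec u u) = 1 := by
  rw [sub_mul, mul_sub, mul_sub, vecMulVec_mul_vecMulVec, hu, two_smul, vecMulVec_add]
  simp only [one_mul, mul_one]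
  abel

end

section

def flipMatrix (n : ℕ) : Matrix (Fin n) (Fin n) ℝ :=
  Matrix.of fun (i j : Fin n) =>
    if ((i:ℕ) = 0 ∧ (j:ℕ) = n - 1) ∨ ((i:ℕ) = n - 1 ∧ (j:ℕ) = 0) then (-1 : ℝ)
    else if i = j ∧ (i:ℕ) ≠ 0 ∧ (i:ℕ) ≠ n - 1 then 1 else 0

noncomputable def cartanEntry (n : ℕ) (t : ℝ) (i : Fin n) : ℝ :=
  if (i:ℕ) = 0 then Real.exp t else if (i:ℕ) = n - 1 then Real.exp (-t) else 1

def edgeVector (n : ℕ) (i : Fin n) : ℝ :=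
  if (i:ℕ) = 0 ∨ (i:ℕ) = n - 1 then 1 else 0

variable {n : ℕ}

theorem edgeVector_dotProduct_self (hn : 2 ≤ n) : edgeVector n ⬝ᵥ edgeVector n = 2 := by
  obtain ⟨m, rfl⟩ := Nat.exists_eq_add_of_le' hn
  rw [dotProduct, Fin.sum_univ_castSucc, Fin.sum_univ_succ]
  simp [edgeVector, fun x : Fin m => x.isLt.ne]
  norm_num

theorem flipMatrix_eq_one_sub_vecMulVec (hn : 2 ≤ n) :
    flipMatrix n = 1 - vecMulVec (edgeVector n) (edgeVector n) := by
  ext i j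
  simp only [flipMatrix, edgeVector, of_apply, Matrix.sub_apply, one_apply, vecMulVec_apply,
    Fin.ext_iff]
  split_ifs <;> first | (exfalso; omega) | norm_num

theorem cartanEntry_add (s t : ℝ) (i : Fin n) :
    cartanEntry n s i * cartanEntry n t i = cartanEntry n (s + t) i := by
  unfold cartanEntry
  split_ifs <;> simp [← Real.exp_add, add_comm]

theorem cartanEntry_zero : cartanEntry n 0 = 1 := by
  funext i
  simp [cartanEntry]

theorem flipMatrix_mul_self (hn : 2 ≤ n) : flipMatrix n * flipMatrix n = 1 := by
  rw [flipMatrix_eq_one_sub_vecMulVec hn]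
  exact one_sub_vecMulVec_mul_self (edgeVector_dotProduct_self hn)

theorem transpose_flipMatrix (hn : 2 ≤ n) : (flipMatrix n)ᵀ = flipMatrix n := by
  rw [flipMatrix_eq_one_sub_vecMulVec hn, transpose_sub, transpose_one, transpose_vecMulVec]

theorem diagonal_cartanEntry_mul (s t : ℝ) :
    diagonal (cartanEntry n s) * diagonal (cartanEntry n t) = diagonal (cartanEntry n (s + t)) := by
  rw [diagonal_mul_diagonal]
  exact congrArg diagonal (funext (cartanEntry_add s t))

theorem flipMatrix_mul_diagonal_cartanEntry (hn : 2 ≤ n) (t : ℝ) :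
    flipMatrix n * diagonal (cartanEntry n t) = diagonal (cartanEntry n (-t)) * flipMatrix n := by
  ext i j
  simp only [mul_diagonal, diagonal_mul, flipMatrix, cartanEntry, of_apply, Fin.ext_iff, neg_neg]
  split_ifs <;> first | (exfalso; omega) | ring1

theorem flipMatrix_conj_diagonal_cartanEntry (hn : 2 ≤ n) (t : ℝ) :
    flipMatrix n * diagonal (cartanEntry n t) * (flipMatrix n)⁻¹
      = diagonal (cartanEntry n (-t)) := by
  have hSS := flipMatrix_mul_self hn
  rw [inv_eq_left_inv hSS, flipMatrix_mul_diagonal_cartanEntry hn, mul_assoc, hSS, mul_one]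

theorem inv_diagonal_cartanEntry (t : ℝ) :
    (diagonal (cartanEntry n t))⁻¹ = diagonal (cartanEntry n (-t)) := by
  refine inv_eq_left_inv ?_
  rw [diagonal_cartanEntry_mul, neg_add_cancel, cartanEntry_zero]
  exact diagonal_one

theorem sum_cartanEntry (hn : 2 ≤ n) (t : ℝ) :
    ∑ i, cartanEntry n t i = n - 2 + 2 * Real.cosh t := by
  obtain ⟨m, rfl⟩ := Nat.exists_eq_add_of_le' hn
  rw [Fin.sum_univ_castSucc, Fin.sum_univ_succ]
  simp [cartanEntry, Real.cosh_eq, fun x : Fin m => x.isLt.ne]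
  ring

end

theorem stmt_9_general (n : ℕ) (hn : 3 ≤ n) (t : ℝ)
    (S : Matrix (Fin n) (Fin n) ℝ)
    (hS : S = Matrix.of fun (i j : Fin n) =>
      if ((i:ℕ) = 0 ∧ (j:ℕ) = n - 1) ∨ ((i:ℕ) = n - 1 ∧ (j:ℕ) = 0) then (-1 : ℝ)
      else if i = j ∧ (i:ℕ) ≠ 0 ∧ (i:ℕ) ≠ n - 1 then 1 else 0)
    (a : Matrix (Fin n) (Fin n) ℝ)
    (ha : a = Matrix.diagonal fun (i : Fin n) =>
      if (i:ℕ) = 0 then Real.exp t else if (i:ℕ) = n - 1 then Real.exp (-t) else 1)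
    (g kk h : Matrix (Fin n) (Fin n) ℝ)
    (hkO : kkᵀ * kk = 1)
    (hhH : S * h * S⁻¹ = h) (hhdet : h.det = 1)
    (hg : g = kk * a * h) :
    Matrix.trace ((g * (S * g * S⁻¹)⁻¹) * (g * (S * g * S⁻¹)⁻¹)ᵀ)
      = (n:ℝ) - 2 + 2 * Real.cosh (4*t) := by
  obtain rfl : S = flipMatrix n := hS
  obtain rfl : a = diagonal (cartanEntry n t) := ha
  have hn2 : 2 ≤ n := by omega
  have hS_orth : (flipMatrix n)ᵀ * flipMatrix n = 1 := by
    rw [transpose_flipMatrix hn2, flipMatrix_mul_self hn2]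
  rw [trace_mul_conj_inv_mul_transpose hS_orth hkO (hhdet ▸ isUnit_one) hhH hg,
    flipMatrix_conj_diagonal_cartanEntry hn2, inv_diagonal_cartanEntry, neg_neg,
    diagonal_cartanEntry_mul, diagonal_transpose, diagonal_cartanEntry_mul, trace_diagonal,
    sum_cartanEntry hn2, show t + t + (t + t) = 4 * t by ring]

/-- if `g ∈ K a_t H` in `SL(n,ℝ)`, then
`‖g σ(g)⁻¹‖²_HS = n - 2 + 2 cosh(4t)`. -/
theorem stmt_9 (n : ℕ) (hn : 3 ≤ n) (t : ℝ)
    (S : Matrix (Fin n) (Fin n) ℝ)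
    (hS : S = Matrix.of fun (i j : Fin n) =>
      if ((i:ℕ) = 0 ∧ (j:ℕ) = n - 1) ∨ ((i:ℕ) = n - 1 ∧ (j:ℕ) = 0) then (-1 : ℝ)
      else if i = j ∧ (i:ℕ) ≠ 0 ∧ (i:ℕ) ≠ n - 1 then 1 else 0)
    (a : Matrix (Fin n) (Fin n) ℝ)
    (ha : a = Matrix.diagonal fun (i : Fin n) =>
      if (i:ℕ) = 0 then Real.exp t else if (i:ℕ) = n - 1 then Real.exp (-t) else 1)
    (g kk h : Matrix (Fin n) (Fin n) ℝ)
    (hkO : kkᵀ * kk = 1) (hkdet : kk.det = 1)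
    (hhH : S * h * S⁻¹ = h) (hhdet : h.det = 1)
    (hg : g = kk * a * h) :
    Matrix.trace ((g * (S * g * S⁻¹)⁻¹) * (g * (S * g * S⁻¹)⁻¹)ᵀ)
      = (n:ℝ) - 2 + 2 * Real.cosh (4*t) :=
  stmt_9_general n hn t S hS a ha g kk h hkO hhH hhdet hg
end

section
/- Let n ≥ 3 and for x, y ∈ ℝ^{n-2}, z ∈ ℝ let u_{x,y,z} be the upper triangular unipotent matrix with first row (1, xᵗ, z), middle block I_{n-2} with last column y, and last row (0,…,0,1). Then tr(A Aᵗ) for A = u_{x,y,z} S u_{x,y,z}^{-1} S^{-1} (with S as in the involution σ(g) = SgS^{-1}) equals n - 2 + (1 - z + ⟨x,y⟩)²(1+z)² + (1 - z + ⟨x,y⟩)²‖y‖² + (⟨x,y⟩ - z)² + (1+z)²‖x‖² + 2⟨x,y⟩ + ‖x‖²‖y‖² + ‖x‖² + z² + ‖y‖² + 1. -/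
open Matrix

set_option maxHeartbeats 1000000 in
/-- explicit value of `tr(A Aᵀ)` for `A = u_{x,y,z} S u_{x,y,z}⁻¹ S⁻¹`.
Here `n = m + 2` and the index set `Fin 1 ⊕ Fin m ⊕ Fin 1` realizes the block
structure `1 + (n-2) + 1`. -/
theorem stmt_10 (m : ℕ) (hm : 1 ≤ m) (x y : Fin m → ℝ) (z : ℝ)
    (u S : Matrix (Fin 1 ⊕ Fin m ⊕ Fin 1) (Fin 1 ⊕ Fin m ⊕ Fin 1) ℝ)
    (hu : u = Matrix.of fun i j =>
      match i, j with
      | Sum.inl _, Sum.inl _ => (1 : ℝ)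
      | Sum.inl _, Sum.inr (Sum.inl jj) => x jj
      | Sum.inl _, Sum.inr (Sum.inr _) => z
      | Sum.inr (Sum.inl ii), Sum.inr (Sum.inl jj) => if ii = jj then 1 else 0
      | Sum.inr (Sum.inl ii), Sum.inr (Sum.inr _) => y ii
      | Sum.inr (Sum.inr _), Sum.inr (Sum.inr _) => 1
      | _, _ => 0)
    (hS : S = Matrix.of fun i j =>
      match i, j with
      | Sum.inl _, Sum.inr (Sum.inr _) => (-1 : ℝ)
      | Sum.inr (Sum.inr _), Sum.inl _ => -1
      | Sum.inr (Sum.inl ii), Sum.inr (Sum.inl jj) => if ii = jj then 1 else 0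
      | _, _ => 0) :
    Matrix.trace ((u * S * u⁻¹ * S⁻¹) * (u * S * u⁻¹ * S⁻¹)ᵀ)
      = (m:ℝ)
        + (1 - z + ∑ i, x i * y i)^2 * (1+z)^2
        + (1 - z + ∑ i, x i * y i)^2 * (∑ i, (y i)^2)
        + ((∑ i, x i * y i) - z)^2
        + (1+z)^2 * (∑ i, (x i)^2)
        + 2 * (∑ i, x i * y i)
        + (∑ i, (x i)^2) * (∑ i, (y i)^2)
        + (∑ i, (x i)^2)
        + z^2
        + (∑ i, (y i)^2)
        + 1 := by
  set p := ∑ i, x i * y i with hp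
  set uinv : Matrix (Fin 1 ⊕ Fin m ⊕ Fin 1) (Fin 1 ⊕ Fin m ⊕ Fin 1) ℝ :=
    Matrix.of (fun i j =>
      match i, j with
      | Sum.inl _, Sum.inl _ => (1 : ℝ)
      | Sum.inl _, Sum.inr (Sum.inl jj) => -x jj
      | Sum.inl _, Sum.inr (Sum.inr _) => p - z
      | Sum.inr (Sum.inl ii), Sum.inr (Sum.inl jj) => if ii = jj then 1 else 0
      | Sum.inr (Sum.inl ii), Sum.inr (Sum.inr _) => -y ii
      | Sum.inr (Sum.inr _), Sum.inr (Sum.inr _) => 1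
      | _, _ => 0) with huinv
  have h1 : u * uinv = 1 := by
    ext i j
    rcases i with i | i | i <;> rcases j with j | j | j <;>
      simp [hu, huinv, Matrix.mul_apply, Fintype.sum_sum_type, Matrix.one_apply,
        mul_ite, ite_mul, Finset.sum_ite_eq, Finset.sum_ite_eq', hp, Finset.mul_sum,
        eq_iff_true_of_subsingleton, mul_comm] <;> ring_nf
  have hSS : S * S = 1 := by
    ext i j
    rcases i with i | i | i <;> rcases j with j | j | j <;>
      simp [hS, Matrix.mul_apply, Fintype.sum_sum_type, Matrix.one_apply,
        mul_ite, ite_mul, Finset.sum_ite_eq, Finset.sum_ite_eq',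
        eq_iff_true_of_subsingleton]
  have hui : u⁻¹ = uinv := Matrix.inv_eq_right_inv h1
  have hSi : S⁻¹ = S := Matrix.inv_eq_right_inv hSS
  -- step 1: C = u * S
  set C : Matrix (Fin 1 ⊕ Fin m ⊕ Fin 1) (Fin 1 ⊕ Fin m ⊕ Fin 1) ℝ :=
    Matrix.of (fun i j =>
      match i, j with
      | Sum.inl _, Sum.inl _ => -z
      | Sum.inl _, Sum.inr (Sum.inl jj) => x jj
      | Sum.inl _, Sum.inr (Sum.inr _) => (-1 : ℝ)
      | Sum.inr (Sum.inl ii), Sum.inl _ => -y ii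
      | Sum.inr (Sum.inl ii), Sum.inr (Sum.inl jj) => if ii = jj then 1 else 0
      | Sum.inr (Sum.inl _), Sum.inr (Sum.inr _) => 0
      | Sum.inr (Sum.inr _), Sum.inl _ => -1
      | Sum.inr (Sum.inr _), Sum.inr _ => 0) with hC
  have hC1 : u * S = C := by
    ext i j
    rcases i with i | i | i <;> rcases j with j | j | j <;>
      simp [hu, hS, hC, Matrix.mul_apply, Fintype.sum_sum_type,
        mul_ite, ite_mul, Finset.sum_ite_eq, Finset.sum_ite_eq',
        eq_iff_true_of_subsingleton]
  -- step 2: B = C * uinv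
  set B : Matrix (Fin 1 ⊕ Fin m ⊕ Fin 1) (Fin 1 ⊕ Fin m ⊕ Fin 1) ℝ :=
    Matrix.of (fun i j =>
      match i, j with
      | Sum.inl _, Sum.inl _ => -z
      | Sum.inl _, Sum.inr (Sum.inl jj) => (1 + z) * x jj
      | Sum.inl _, Sum.inr (Sum.inr _) => -((1 - z + p) * (1 + z))
      | Sum.inr (Sum.inl ii), Sum.inl _ => -y ii
      | Sum.inr (Sum.inl ii), Sum.inr (Sum.inl jj) => (if ii = jj then 1 else 0) + y ii * x jj
      | Sum.inr (Sum.inl ii), Sum.inr (Sum.inr _) => -((1 - z + p) * y ii)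
      | Sum.inr (Sum.inr _), Sum.inl _ => -1
      | Sum.inr (Sum.inr _), Sum.inr (Sum.inl jj) => x jj
      | Sum.inr (Sum.inr _), Sum.inr (Sum.inr _) => -(p - z)) with hB
  have hB1 : C * uinv = B := by
    ext i j
    rcases i with i | i | i <;> rcases j with j | j | j <;>
      simp [hC, huinv, hB, Matrix.mul_apply, Fintype.sum_sum_type,
        mul_ite, ite_mul, Finset.sum_ite_eq, Finset.sum_ite_eq', hp,
        Finset.mul_sum, Finset.sum_add_distrib, eq_iff_true_of_subsingleton,
        mul_comm] <;> ring_nf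
  -- step 3: A = B * S
  set A : Matrix (Fin 1 ⊕ Fin m ⊕ Fin 1) (Fin 1 ⊕ Fin m ⊕ Fin 1) ℝ :=
    Matrix.of (fun i j =>
      match i, j with
      | Sum.inl _, Sum.inl _ => (1 - z + p) * (1 + z)
      | Sum.inl _, Sum.inr (Sum.inl jj) => (1 + z) * x jj
      | Sum.inl _, Sum.inr (Sum.inr _) => z
      | Sum.inr (Sum.inl ii), Sum.inl _ => (1 - z + p) * y ii
      | Sum.inr (Sum.inl ii), Sum.inr (Sum.inl jj) => (if ii = jj then 1 else 0) + y ii * x jj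
      | Sum.inr (Sum.inl ii), Sum.inr (Sum.inr _) => y ii
      | Sum.inr (Sum.inr _), Sum.inl _ => p - z
      | Sum.inr (Sum.inr _), Sum.inr (Sum.inl jj) => x jj
      | Sum.inr (Sum.inr _), Sum.inr (Sum.inr _) => 1) with hA
  have hA1 : B * S = A := by
    ext i j
    rcases i with i | i | i <;> rcases j with j | j | j <;>
      simp [hB, hS, hA, Matrix.mul_apply, Fintype.sum_sum_type,
        mul_ite, ite_mul, Finset.sum_ite_eq, Finset.sum_ite_eq',
        eq_iff_true_of_subsingleton]
  have hprod : u * S * u⁻¹ * S⁻¹ = A := by rw [hui, hSi, hC1, hB1, hA1]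
  rw [hprod, hA]
  simp only [Matrix.trace, Matrix.diag, Matrix.mul_apply, Matrix.transpose_apply,
    Matrix.of_apply, Fintype.sum_sum_type, Fin.sum_univ_one]
  have expand : ∀ i : Fin m, ∑ j, ((if i = j then (1:ℝ) else 0) + y i * x j) *
      ((if i = j then 1 else 0) + y i * x j)
      = 1 + 2 * (y i * x i) + y i ^ 2 * ∑ j, x j ^ 2 := by
    intro i
    have h : ∀ j, ((if i = j then (1:ℝ) else 0) + y i * x j) *
        ((if i = j then 1 else 0) + y i * x j)
        = ((if i = j then 1 + 2 * (y i * x j) else 0) + y i ^ 2 * x j ^ 2) := by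
      intro j; split <;> ring
    rw [Finset.sum_congr rfl (fun j _ => h j), Finset.sum_add_distrib,
      Finset.sum_ite_eq, ← Finset.mul_sum]
    simp
  simp only [expand, Finset.sum_add_distrib, Finset.sum_const, Finset.card_univ,
    Fintype.card_fin, nsmul_eq_mul, mul_one]
  have e1 : ∑ i, (1+z) * x i * ((1+z) * x i) = (1+z)^2 * ∑ i, x i ^ 2 := by
    rw [Finset.mul_sum]; exact Finset.sum_congr rfl fun i _ => by ring
  have e2 : ∑ i, (1-z+p) * y i * ((1-z+p) * y i) = (1-z+p)^2 * ∑ i, y i ^ 2 := by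
    rw [Finset.mul_sum]; exact Finset.sum_congr rfl fun i _ => by ring
  have e3 : ∑ i, y i * y i = ∑ i, y i ^ 2 :=
    Finset.sum_congr rfl fun i _ => by ring
  have e4 : ∑ i, x i * x i = ∑ i, x i ^ 2 :=
    Finset.sum_congr rfl fun i _ => by ring
  have e5 : ∑ i, 2 * (y i * x i) = 2 * p := by
    rw [hp, Finset.mul_sum]; exact Finset.sum_congr rfl fun i _ => by ring
  have e6 : ∑ i : Fin m, y i ^ 2 * ∑ j, x j ^ 2 = (∑ i, y i ^ 2) * ∑ j, x j ^ 2 :=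
    (Finset.sum_mul _ _ _).symm
  rw [e1, e2, e3, e4, e5, e6]
  ring
end

section
/- Let n ≥ 3, and for x, y ∈ ℝ^{n-1} with ⟨x,y⟩ = 0 let M(x,y) be the n×n matrix with upper-left (n-1)×(n-1) block I_{n-1} + 2xyᵗ, last column (2x, 1), and last row (2yᵗ, 1). Then tr(M(x,y) M(x,y)ᵗ) = n + 4‖x‖² + 4‖y‖² + 4‖x‖²‖y‖². -/
open Matrix

/-- `tr(M(x,y) M(x,y)ᵀ) = n + 4‖x‖² + 4‖y‖² + 4‖x‖²‖y‖²` for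
orthogonal `x, y ∈ ℝ^{n-1}`; here `n = m + 1` and the index set `Fin m ⊕ Fin 1`
realizes the block structure `(n-1) + 1`. -/
theorem stmt_11 (m : ℕ) (hm : 2 ≤ m) (x y : Fin m → ℝ)
    (horth : ∑ i, x i * y i = 0)
    (M : Matrix (Fin m ⊕ Fin 1) (Fin m ⊕ Fin 1) ℝ)
    (hM : M = Matrix.of fun i j =>
      match i, j with
      | Sum.inl ii, Sum.inl jj => (if ii = jj then 1 else 0) + 2 * x ii * y jj
      | Sum.inl ii, Sum.inr _ => 2 * x ii
      | Sum.inr _, Sum.inl jj => 2 * y jj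
      | Sum.inr _, Sum.inr _ => 1) :
    Matrix.trace (M * Mᵀ)
      = ((m:ℝ) + 1) + 4 * (∑ i, (x i)^2) + 4 * (∑ i, (y i)^2)
        + 4 * (∑ i, (x i)^2) * (∑ i, (y i)^2) := by
  subst hM
  simp only [Matrix.trace, Matrix.diag, Matrix.mul_apply, Matrix.transpose_apply,
    Fintype.sum_sum_type, Matrix.of_apply, Finset.univ_unique, Finset.sum_singleton]
  have key : ∀ ii : Fin m, ∑ jj, ((if ii = jj then (1:ℝ) else 0) + 2 * x ii * y jj)^2
      = 1 + 4 * x ii * y ii + 4 * (x ii)^2 * ∑ jj, (y jj)^2 := by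
    intro ii
    have : ∀ jj : Fin m, ((if ii = jj then (1:ℝ) else 0) + 2 * x ii * y jj)^2
        = (if ii = jj then (1:ℝ) + 4 * x ii * y jj else 0) + 4 * (x ii)^2 * (y jj)^2 := by
      intro jj; split <;> ring
    simp only [this, Finset.sum_add_distrib, Finset.sum_ite_eq, Finset.mem_univ, if_true,
      ← Finset.mul_sum]
  simp only [← sq, key]
  simp only [Finset.sum_add_distrib, Finset.sum_const, Finset.card_univ, Fintype.card_fin,
    nsmul_eq_mul, mul_one]
  have e0 : ∑ i : Fin m, 4 * x i * y i = 0 := by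
    have : ∑ i, 4 * x i * y i = 4 * ∑ i, x i * y i := by
      rw [Finset.mul_sum]; exact Finset.sum_congr rfl fun i _ => by ring
    rw [this, horth, mul_zero]
  have e2 : ∑ i : Fin m, 4 * (x i)^2 * ∑ jj, (y jj)^2
      = 4 * (∑ i, (x i)^2) * (∑ i, (y i)^2) := by
    rw [← Finset.sum_mul, ← Finset.mul_sum]
  have e3 : ∑ i : Fin m, (2 * x i)^2 = 4 * ∑ i, (x i)^2 := by
    rw [Finset.mul_sum]; exact Finset.sum_congr rfl fun i _ => by ring
  have e4 : ∑ i : Fin m, (2 * y i)^2 = 4 * ∑ i, (y i)^2 := by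
    rw [Finset.mul_sum]; exact Finset.sum_congr rfl fun i _ => by ring
  rw [e0, e2, e3, e4]
  ring
end

section
/- Let n ≥ 3, 2 ≤ k ≤ l ≤ n, and consider c'(y,z) = (1-z)²(‖y‖² + (1+z)² + 1)/(1 + ‖w‖²) + (z² + 2z + ‖y‖²), where y = (v, w, 0) with v ∈ ℝ^{k-2}, w ∈ ℝ^{l-k}, and z ∈ ℝ. Then c'(y,z) ≥ (1/4)(‖w‖² + 1)^{-1}((1-z)² + 1)(‖v‖² + (1+z)² + 1) + ‖w‖² + 1. Moreover c'(y,z) ≥ 2. -/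
/-- lower bound for `c'(y,z)`, where `y = (v,w,0)`. -/
theorem stmt_17 (n k l : ℕ) (hn : 3 ≤ n) (hk : 2 ≤ k) (hkl : k ≤ l) (hln : l ≤ n)
    (v : EuclideanSpace ℝ (Fin (k-2))) (w : EuclideanSpace ℝ (Fin (l-k))) (z : ℝ) :
    (1/4) * (‖w‖^2 + 1)⁻¹ * ((1-z)^2 + 1) * (‖v‖^2 + (1+z)^2 + 1) + ‖w‖^2 + 1 ≤
      (1-z)^2 * ((‖v‖^2 + ‖w‖^2) + (1+z)^2 + 1) / (1 + ‖w‖^2)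
        + (z^2 + 2*z + (‖v‖^2 + ‖w‖^2)) ∧
    2 ≤ (1-z)^2 * ((‖v‖^2 + ‖w‖^2) + (1+z)^2 + 1) / (1 + ‖w‖^2)
        + (z^2 + 2*z + (‖v‖^2 + ‖w‖^2)) := by
  have hV : (0:ℝ) ≤ ‖v‖^2 := sq_nonneg _
  have hW : (0:ℝ) ≤ ‖w‖^2 := sq_nonneg _
  set V := ‖v‖^2 with hVdef
  set W := ‖w‖^2 with hWdef
  have hD : (0:ℝ) < 1 + W := by linarith
  have hD' : (1:ℝ) + W ≠ 0 := ne_of_gt hD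
  have hD'' : (W:ℝ) + 1 ≠ 0 := by linarith
  constructor
  · rw [← sub_nonneg]
    have h : (1-z)^2 * ((V + W) + (1+z)^2 + 1) / (1 + W) + (z^2 + 2*z + (V + W))
        - ((1/4) * (W + 1)⁻¹ * ((1-z)^2 + 1) * (V + (1+z)^2 + 1) + W + 1)
        = (4*(1-z)^2*(V + W + (1+z)^2 + 1) + 4*(z^2+2*z+V+W)*(1+W)
            - ((1-z)^2+1)*(V+(1+z)^2+1) - 4*(W+1)*(1+W)) / (4*(1+W)) := by
      field_simp
      ring
    rw [h]
    apply div_nonneg _ (by linarith)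
    nlinarith [sq_nonneg (z*z), sq_nonneg z, mul_nonneg hV hW, sq_nonneg (1-z),
      sq_nonneg (1+z), mul_nonneg hW (sq_nonneg (1-z)), mul_nonneg hV (sq_nonneg z),
      mul_nonneg hW (sq_nonneg z), sq_nonneg W, mul_nonneg hV (sq_nonneg (1-z)),
      mul_nonneg hW (sq_nonneg (1+z)), mul_nonneg hV (sq_nonneg (1+z))]
  · rw [← sub_nonneg]
    have h : (1-z)^2 * ((V + W) + (1+z)^2 + 1) / (1 + W) + (z^2 + 2*z + (V + W)) - 2
        = ((1-z)^2*(V + W + (1+z)^2 + 1) + (z^2+2*z+V+W-2)*(1+W)) / (1+W) := by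
      field_simp
      ring
    rw [h]
    apply div_nonneg _ (by linarith)
    nlinarith [sq_nonneg (z*z), sq_nonneg z, mul_nonneg hV hW, sq_nonneg (1-z),
      sq_nonneg (1+z), mul_nonneg hW (sq_nonneg (1-z)), mul_nonneg hW (sq_nonneg z),
      mul_nonneg hW (sq_nonneg (1+z)), mul_nonneg hV (sq_nonneg (1-z))]
end
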